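/- Let d ≥ 1, let m > 1 be an integer, θ ∈ (0, 1), and let V ≥ 0 belong to L¹_loc(ℝ^d). For each l ∈ ℤ^d let {D_j(l)}_{j=1}^∞ be a sequence of subsets of the cube Q₁(l) forming a (log_m, θ)-dense system in Q₁(l). For n ∈ ℕ and ξ ∈ m^{−n}·ℤ^d write Q(ξ, n) := Q_{m^{−n}}(ξ), and let Ξ_n(l, j) := {ξ ∈ m^{−n}·ℤ^d : Q(ξ, n) ⊆ D_j(l)}; assume Ξ_n(l, j) ≠ ∅ for every l ∈ ℤ^d, n ∈ ℕ and j ∈ {1, …, n}. Let γ : (0, r₀) → (0, 1) be a nondecreasing function with limsup_{r↓0} r^{−2} γ(r) = ∞, and suppose that for every natural n: lim_{|l|→∞} min_{ξ ∈ ⋃_{j=1}^n Ξ_n(l, j)} V⋆(γ(m^{−n})·mes_d(Q(0, n)); Q(ξ, n)) = ∞. Then there exist r₀′ > 0 and a function γ̄ : (0, r₀′) → (0, 1) with limsup_{r↓0} r^{−2} γ̄(r) = ∞ such that for every r ∈ (0, r₀′]: lim_{|y|→∞} V⋆(γ̄(r)·mes_d(Q_r(y)); Q_r(y)) = ∞.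 -/

import Mathlib

open MeasureTheory Filter

/-- The nonincreasing rearrangement of a nonnegative function `f` with respect to a
measure `μ`: `f⋆(t; X; μ) := sup {s > 0 : μ {x : f x ≥ s} ≥ t}`, with `sup ∅ = 0`. -/
noncomputable def rearr {X : Type*} [MeasurableSpace X] (μ : Measure X)
    (f : X → ℝ) (t : ℝ) : ℝ :=
  sSup {s : ℝ | 0 < s ∧ ENNReal.ofReal t ≤ μ {x | s ≤ f x}}

/-- The closed cube `Q_r(y) = y + [-r, r]^d` of side `2r` centered at `y`. -/
def cube {d : ℕ} (r : ℝ) (y : EuclideanSpace ℝ (Fin d)) : Set (EuclideanSpace ℝ (Fin d)) :=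
  {x | ∀ i, |x i - y i| ≤ r}

/-- A regular parallelepiped: a set of the form `×_{k=1}^d [a_k, b_k]`. -/
def IsRegParallelepiped {d : ℕ} (P : Set (EuclideanSpace ℝ (Fin d))) : Prop :=
  ∃ a b : Fin d → ℝ, P = {x | ∀ i, a i ≤ x i ∧ x i ≤ b i}

/-- A finite union of regular parallelepipeds. -/
def IsFinUnionRegPar {d : ℕ} (D : Set (EuclideanSpace ℝ (Fin d))) : Prop :=
  ∃ S : Finset (Set (EuclideanSpace ℝ (Fin d))),
    (∀ P ∈ S, IsRegParallelepiped P) ∧ D = ⋃ P ∈ S, P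

/-- A `(log_m, θ)`-dense system `{D_n}_{n ≥ 1}` in the cube `Q₁(y)`. -/
def IsLogDenseSystem {d : ℕ} (m : ℕ) (θ : ℝ) (y : EuclideanSpace ℝ (Fin d))
    (D : ℕ → Set (EuclideanSpace ℝ (Fin d))) : Prop :=
  (∀ n, 1 ≤ n → D n ⊆ cube 1 y ∧ IsFinUnionRegPar (D n)) ∧
  ∀ (z : EuclideanSpace ℝ (Fin d)) (r : ℝ), 0 < r → r < min 1 (1 / (θ * (m : ℝ) ^ 2)) →
    cube r z ⊆ cube 1 y →
    ∃ j : ℕ, 1 ≤ j ∧ (j : ℝ) ≤ Real.logb m (1 / (θ * r)) ∧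
      ∃ P, IsRegParallelepiped P ∧ P ⊆ D j ∧
        ∃ s, cube (θ * r) s ⊆ P ∩ cube r z

/-- The embedding of an integer vector `l ∈ ℤ^d` into `ℝ^d`. -/
def ofInt {d : ℕ} (l : Fin d → ℤ) : EuclideanSpace ℝ (Fin d) :=
  WithLp.toLp 2 (fun i => (l i : ℝ))

/-- The point of the `m`-adic lattice `m^{-n}·ℤ^d` with integer coordinates `k`. -/
noncomputable def latt {d : ℕ} (m n : ℕ) (k : Fin d → ℤ) : EuclideanSpace ℝ (Fin d) :=
  WithLp.toLp 2 (fun i => (k i : ℝ) / (m : ℝ) ^ n)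

/-- The `m`-adic cube `Q(ξ, n) = Q_{m^{-n}}(ξ)` with `ξ = latt m n k ∈ m^{-n}·ℤ^d`. -/
noncomputable def adicCube {d : ℕ} (m n : ℕ) (k : Fin d → ℤ) :
    Set (EuclideanSpace ℝ (Fin d)) :=
  cube (((m : ℝ) ^ n)⁻¹) (latt m n k)

/-!
Fix `r` and let `h = m⁻ⁿ` be the `m`-adic scale with `θr/(2m) ≤ h < θr/2`. The cube `Q_r(y)`
lies in the unit cube `Q₁(l)` around the nearest lattice point `l`, and density of
`{D_j(l)}` yields `j ≤ log_m (1/(θr)) ≤ n` and a cube of radius `θr` inside `D_j(l) ∩ Q_r(y)`,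
which in turn contains an adic cube `Q(ξ, n)`. The rearrangement only grows with the domain, and
`γ̄(r) := γ(h) (h/r)^d` is chosen so that `γ̄(r) |Q_r| = γ(h) |Q(0, n)|`; hence
`V⋆(γ̄(r)|Q_r|; Q_r(y)) ≥ V⋆(γ(h)|Q(0, n)|; Q(ξ, n)) → ∞` as `|y| → ∞`, since then `|l| → ∞`.
Since `h ≥ cr` with `c = θ/(2m)`, `γ̄(r)/r² ≥ c^(d+2) γ(cr)/(cr)²`, so `γ̄` inherits the growth
of `γ`.
-/

open Set

section Cubes

variable {d : ℕ}

lemma cube_eq_preimage_ofLp (r : ℝ) (y : EuclideanSpace ℝ (Fin d)) :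
    cube r y = WithLp.ofLp ⁻¹' univ.pi fun i => Icc (y i - r) (y i + r) := by
  ext x
  simp only [cube, mem_preimage, mem_univ_pi, mem_Icc, abs_sub_le_iff]
  exact forall_congr' fun i => by constructor <;> rintro ⟨h₁, h₂⟩ <;> constructor <;> linarith

lemma volume_cube_toReal {r : ℝ} (hr : 0 ≤ r) (y : EuclideanSpace ℝ (Fin d)) :
    (volume (cube r y)).toReal = (2 * r) ^ d := by
  rw [cube_eq_preimage_ofLp, (PiLp.volume_preserving_ofLp (Fin d)).measure_preimage
    (MeasurableSet.univ_pi fun i => measurableSet_Icc).nullMeasurableSet, volume_pi_pi]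
  simp [Real.volume_Icc, ENNReal.toReal_ofReal, hr, two_mul]

lemma isCompact_cube (r : ℝ) (y : EuclideanSpace ℝ (Fin d)) : IsCompact (cube r y) := by
  rw [cube_eq_preimage_ofLp]
  exact (PiLp.homeomorph 2 _).isCompact_preimage.2 (isCompact_univ_pi fun i => isCompact_Icc)

lemma cube_subset_cube {r s : ℝ} {y z : EuclideanSpace ℝ (Fin d)}
    (h : ∀ i, |y i - z i| + r ≤ s) : cube r y ⊆ cube s z := fun x hx i =>
  calc |x i - z i| ≤ |x i - y i| + |y i - z i| := abs_sub_le _ _ _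
    _ ≤ s := by linarith [hx i, h i]

lemma cube_subset_cube_one_round {r : ℝ} (hr : r ≤ 1 / 2) (y : EuclideanSpace ℝ (Fin d)) :
    cube r y ⊆ cube 1 (ofInt fun i => round (y i)) :=
  cube_subset_cube fun i => by
    change |y i - (round (y i) : ℝ)| + r ≤ 1
    linarith [abs_sub_round (y i)]

lemma exists_adicCube_subset_cube {m : ℕ} (hm : 0 < m) (n : ℕ) {ρ : ℝ}
    (hρ : 2 * ((m : ℝ) ^ n)⁻¹ ≤ ρ) (s : EuclideanSpace ℝ (Fin d)) :
    ∃ k, adicCube m n k ⊆ cube ρ s := by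
  have hpow : (0 : ℝ) < (m : ℝ) ^ n := by positivity
  refine ⟨fun i => ⌊s i * (m : ℝ) ^ n⌋, cube_subset_cube fun i => ?_⟩
  have h₁ := Int.floor_le (s i * (m : ℝ) ^ n)
  have h₂ := Int.sub_one_lt_floor (s i * (m : ℝ) ^ n)
  have hfloor : |(⌊s i * (m : ℝ) ^ n⌋ : ℝ) / (m : ℝ) ^ n - s i| ≤ ((m : ℝ) ^ n)⁻¹ := by
    rw [show (⌊s i * (m : ℝ) ^ n⌋ : ℝ) / (m : ℝ) ^ n - s i =
        (⌊s i * (m : ℝ) ^ n⌋ - s i * (m : ℝ) ^ n) * ((m : ℝ) ^ n)⁻¹ by field_simp,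
      abs_mul, abs_of_pos (inv_pos.2 hpow)]
    exact mul_le_of_le_one_left (by positivity) (abs_le.2 ⟨by linarith, by linarith⟩)
  change |(⌊s i * (m : ℝ) ^ n⌋ : ℝ) / (m : ℝ) ^ n - s i| + ((m : ℝ) ^ n)⁻¹ ≤ ρ
  linarith

lemma isBounded_preimage_round {S : Set (Fin d → ℤ)} (hS : S.Finite) :
    Bornology.IsBounded {y : EuclideanSpace ℝ (Fin d) | (fun i => round (y i)) ∈ S} :=
  ((Bornology.isBounded_biUnion hS).2 fun l _ => (isCompact_cube 1 (ofInt l)).isBounded).subset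
    fun y hy => mem_biUnion hy
      (cube_subset_cube_one_round (r := 0) (by norm_num) y (by simp [cube]))

lemma tendsto_round_comap_norm_atTop :
    Tendsto (fun (y : EuclideanSpace ℝ (Fin d)) i => round (y i))
      (comap (fun y => ‖y‖) atTop) cofinite := fun S hS => by
  change _ ∈ comap norm atTop
  rw [comap_norm_atTop]
  exact mem_of_superset (Bornology.isBounded_def.1 (isBounded_preimage_round (mem_cofinite.1 hS)))
    fun y hy => not_not.1 hy

end Cubes

section Rearrangement

variable {X : Type*} [MeasurableSpace X] {μ : Measure X} {f : X → ℝ} {t : ℝ}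

/- `sSup` of a set of reals that is not bounded above is `0`, so comparing rearrangements needs
this bound, which is Markov's inequality. -/
lemma bddAbove_rearr_set (hf : Integrable f μ) (ht : 0 < t) :
    BddAbove {s : ℝ | 0 < s ∧ ENNReal.ofReal t ≤ μ {x | s ≤ f x}} := by
  refine ⟨(∫⁻ x, ‖f x‖ₑ ∂μ).toReal / t, fun s ⟨hs, hst⟩ => ?_⟩
  have hlevel : {x | s ≤ f x} ⊆ {x | ENNReal.ofReal s ≤ ‖f x‖ₑ} := fun x hx => by
    rw [mem_ofPred_eq, Real.enorm_eq_ofReal_abs]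
    exact ENNReal.ofReal_le_ofReal (le_trans hx (le_abs_self _))
  have hmarkov : ENNReal.ofReal s * ENNReal.ofReal t ≤ ∫⁻ x, ‖f x‖ₑ ∂μ :=
    calc ENNReal.ofReal s * ENNReal.ofReal t
        ≤ ENNReal.ofReal s * μ {x | ENNReal.ofReal s ≤ ‖f x‖ₑ} := by
          gcongr; exact hst.trans (measure_mono hlevel)
      _ ≤ ∫⁻ x, ‖f x‖ₑ ∂μ := mul_meas_ge_le_lintegral₀ hf.1.enorm _
  rw [le_div_iff₀ ht]
  simpa [ENNReal.toReal_mul, hs.le, ht.le] using ENNReal.toReal_mono hf.2.ne hmarkov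

lemma rearr_restrict_mono {A B : Set X} (hBA : B ⊆ A) (hf : IntegrableOn f A μ) (ht : 0 < t) :
    rearr (μ.restrict B) f t ≤ rearr (μ.restrict A) f t := by
  rcases eq_empty_or_nonempty {s : ℝ | 0 < s ∧ ENNReal.ofReal t ≤ μ.restrict B {x | s ≤ f x}}
    with hB | hB
  · rw [rearr, hB, Real.sSup_empty]
    exact Real.sSup_nonneg fun s hs => hs.1.le
  · refine csSup_le_csSup (bddAbove_rearr_set hf ht) hB fun s ⟨hs, hst⟩ => ⟨hs, ?_⟩
    exact hst.trans (Measure.restrict_mono hBA le_rfl _)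

end Rearrangement

lemma IsLogDenseSystem.exists_adicCube_subset {d m : ℕ} (hm : 1 < m) {θ : ℝ} (hθ : 0 < θ)
    {x : EuclideanSpace ℝ (Fin d)} {D : ℕ → Set (EuclideanSpace ℝ (Fin d))}
    (hD : IsLogDenseSystem m θ x D) {r : ℝ} (hr : 0 < r) (hr₁ : r < min 1 (1 / (θ * m ^ 2)))
    {z : EuclideanSpace ℝ (Fin d)} (hz : cube r z ⊆ cube 1 x) {n : ℕ}
    (hn : 2 * ((m : ℝ) ^ n)⁻¹ ≤ θ * r) :
    ∃ k, (∃ j, 1 ≤ j ∧ j ≤ n ∧ adicCube m n k ⊆ D j) ∧ adicCube m n k ⊆ cube r z := by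
  obtain ⟨j, hj, hjlog, P, -, hPD, s, hs⟩ := hD.2 z r hr hr₁ hz
  obtain ⟨k, hk⟩ := exists_adicCube_subset_cube (by omega) n hn s
  refine ⟨k, ⟨j, hj, ?_, fun y hy => hPD (hs (hk hy)).1⟩, fun y hy => (hs (hk hy)).2⟩
  have hmR : (1 : ℝ) < m := by exact_mod_cast hm
  have hpow : (0 : ℝ) < (m : ℝ) ^ n := by positivity
  rw [← pow_le_pow_iff_right₀ hmR]
  calc (m : ℝ) ^ j ≤ 1 / (θ * r) := by
        rwa [Real.le_logb_iff_rpow_le hmR (by positivity), Real.rpow_natCast] at hjlog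
    _ ≤ (m : ℝ) ^ n := by
        rw [div_le_iff₀ (by positivity)]
        have := mul_le_mul_of_nonneg_left hn hpow.le
        rw [mul_left_comm, mul_inv_cancel₀ hpow.ne'] at this
        nlinarith

lemma exists_inv_pow_succ_mem_Ico {m a : ℝ} (hm : 1 < m) (ha : a ∈ Ioc 0 1) :
    ∃ n : ℕ, (m ^ (n + 1))⁻¹ ∈ Ico (a / m) a := by
  obtain ⟨n, h₁, h₂⟩ := exists_nat_pow_near ((one_le_inv₀ ha.1).2 ha.2) hm
  refine ⟨n, ?_, inv_lt_of_inv_lt₀ ha.1 h₂⟩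
  rw [pow_succ, mul_inv, div_eq_mul_inv]
  exact mul_le_mul_of_nonneg_right ((le_inv_comm₀ ha.1 (by positivity)).2 h₁) (by positivity)

lemma frequently_le_mul_div_sq {γ H : ℝ → ℝ} {c r₀ r₁ : ℝ} (d : ℕ) (hc : 0 < c) (hr₁ : 0 < r₁)
    (hγmono : MonotoneOn γ (Ioo 0 r₀)) (hγ0 : ∀ r ∈ Ioo 0 r₀, 0 ≤ γ r)
    (hγ : ∀ M : ℝ, ∃ᶠ r in nhdsWithin 0 (Ioi 0), M ≤ γ r / r ^ 2)
    (hH : ∀ r ∈ Ioc 0 r₁, c * r ≤ H r ∧ H r < r₀) (M : ℝ) :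
    ∃ᶠ r in nhdsWithin 0 (Ioi 0), M ≤ γ (H r) * (H r / r) ^ d / r ^ 2 := by
  have hscale : Tendsto (· / c) (nhdsWithin 0 (Ioi 0)) (nhdsWithin 0 (Ioi 0)) := by
    simpa using ((continuous_id.div_const c).continuousWithinAt (x := 0)).tendsto_nhdsWithin
      fun ρ (hρ : ρ ∈ Ioi 0) => show ρ / c ∈ Ioi 0 from div_pos hρ hc
  refine hscale.frequently (((hγ (M / c ^ (d + 2))).and_eventually
    (hscale.eventually (Ioc_mem_nhdsGT hr₁))).mono fun ρ ⟨hρM, hρ⟩ => ?_)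
  obtain ⟨hHr, hHr₀⟩ := hH _ hρ
  have hratio : c ^ d ≤ (H (ρ / c) / (ρ / c)) ^ d :=
    pow_le_pow_left₀ hc.le ((le_div_iff₀ hρ.1).2 hHr) d
  rw [mul_div_cancel₀ ρ hc.ne'] at hHr
  have hρ0 : 0 < ρ := (div_pos_iff_of_pos_right hc).1 hρ.1
  have hρmem : ρ ∈ Ioo 0 r₀ := ⟨hρ0, hHr.trans_lt hHr₀⟩
  have hγle : γ ρ ≤ γ (H (ρ / c)) := hγmono hρmem ⟨hρ0.trans_le hHr, hHr₀⟩ hHr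
  calc M = c ^ (d + 2) * (M / c ^ (d + 2)) := by field_simp
    _ ≤ c ^ (d + 2) * (γ ρ / ρ ^ 2) := by gcongr
    _ = c ^ d * γ ρ / (ρ / c) ^ 2 := by field_simp; ring
    _ ≤ (H (ρ / c) / (ρ / c)) ^ d * γ (H (ρ / c)) / (ρ / c) ^ 2 :=
        div_le_div_of_nonneg_right
          (mul_le_mul hratio hγle (hγ0 ρ hρmem) ((pow_pos hc d).le.trans hratio)) (by positivity)
    _ = γ (H (ρ / c)) * (H (ρ / c) / (ρ / c)) ^ d / (ρ / c) ^ 2 := by ring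

lemma tendsto_rearr_cube_of_adicCube {d m : ℕ} (hm : 1 < m) {θ : ℝ} (hθ : 0 < θ)
    {D : (Fin d → ℤ) → ℕ → Set (EuclideanSpace ℝ (Fin d))}
    (hD : ∀ l, IsLogDenseSystem m θ (ofInt l) (D l)) {V : EuclideanSpace ℝ (Fin d) → ℝ}
    (hV : LocallyIntegrable V) {r t : ℝ} (hr : 0 < r) (hr₁ : r ≤ 1 / 2)
    (hrθ : r < 1 / (θ * m ^ 2)) (ht : 0 < t) {n : ℕ} (hn : 2 * ((m : ℝ) ^ n)⁻¹ ≤ θ * r)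
    (hlarge : ∀ M : ℝ, ∀ᶠ l in cofinite, ∀ k,
      (∃ j, 1 ≤ j ∧ j ≤ n ∧ adicCube m n k ⊆ D l j) →
        M ≤ rearr (volume.restrict (adicCube m n k)) V t) :
    Tendsto (fun y => rearr (volume.restrict (cube r y)) V t)
      (comap (fun y => ‖y‖) atTop) atTop := by
  refine tendsto_atTop.2 fun M =>
    (tendsto_round_comap_norm_atTop.eventually (hlarge M)).mono fun y hy => ?_
  obtain ⟨k, hkD, hky⟩ := (hD _).exists_adicCube_subset hm hθ hr
    (lt_min (by linarith) hrθ) (cube_subset_cube_one_round hr₁ y) hn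
  exact (hy k hkD).trans
    (rearr_restrict_mono hky (hV.integrableOn_isCompact (isCompact_cube r y)) ht)

lemma exists_adicScale {m θ : ℝ} (hm : 1 < m) (hθ0 : 0 < θ) (hθ1 : θ < 1) :
    ∃ N : ℝ → ℕ, ∀ r ∈ Ioc 0 1, θ / (2 * m) * r ≤ (m ^ (N r + 1))⁻¹ ∧
      2 * (m ^ (N r + 1))⁻¹ ≤ θ * r ∧ (m ^ (N r + 1))⁻¹ < r := by
  have hθr : ∀ r ∈ Ioc (0 : ℝ) 1, θ * r / 2 ∈ Ioc 0 1 := fun r hr =>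
    ⟨by have := hr.1; positivity, by nlinarith [hr.1, hr.2]⟩
  choose! N hN using fun r hr => exists_inv_pow_succ_mem_Ico hm (hθr r hr)
  refine ⟨N, fun r hr => ?_⟩
  obtain ⟨hlow, hup⟩ := hN r hr
  exact ⟨le_of_eq_of_le (by ring) hlow, by linarith, by nlinarith [hr.1]⟩

lemma mul_div_pow_mem_Ioo {a h r : ℝ} (d : ℕ) (ha : a ∈ Ioo 0 1) (hh : 0 < h) (hhr : h ≤ r) :
    a * (h / r) ^ d ∈ Ioo 0 1 := by
  have hratio : 0 < h / r := div_pos hh (hh.trans_le hhr)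
  exact ⟨mul_pos ha.1 (pow_pos hratio d), mul_lt_one_of_nonneg_of_lt_one_left ha.1.le ha.2
    (pow_le_one₀ hratio.le ((div_le_one (hh.trans_le hhr)).2 hhr))⟩

lemma mul_div_pow_mul_volume_cube_toReal {d : ℕ} (a : ℝ) {h r : ℝ} (hh : 0 ≤ h) (hr : 0 < r)
    (y z : EuclideanSpace ℝ (Fin d)) :
    a * (h / r) ^ d * (volume (cube r y)).toReal = a * (volume (cube h z)).toReal := by
  rw [volume_cube_toReal hr.le, volume_cube_toReal hh, mul_assoc, ← mul_pow]
  field_simp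

theorem stmt17_general {d : ℕ} (m : ℕ) (hm : 1 < m) (θ : ℝ)
    (hθ0 : 0 < θ) (hθ1 : θ < 1)
    (V : EuclideanSpace ℝ (Fin d) → ℝ)
    (hVloc : LocallyIntegrable V)
    (D : (Fin d → ℤ) → ℕ → Set (EuclideanSpace ℝ (Fin d)))
    (hD : ∀ l : Fin d → ℤ, IsLogDenseSystem m θ (ofInt l) (D l))
    (r₀ : ℝ) (hr₀ : 0 < r₀) (γ : ℝ → ℝ) (hγmono : MonotoneOn γ (Set.Ioo 0 r₀))
    (hγ : ∀ r ∈ Set.Ioo (0 : ℝ) r₀, γ r ∈ Set.Ioo (0 : ℝ) 1)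
    (hγlim : ∀ M : ℝ, ∃ᶠ r in nhdsWithin 0 (Set.Ioi 0), M ≤ γ r / r ^ 2)
    (hmain : ∀ n : ℕ, 1 ≤ n → ∀ M : ℝ,
      ∀ᶠ l in (cofinite : Filter (Fin d → ℤ)),
        ∀ k : Fin d → ℤ, (∃ j : ℕ, 1 ≤ j ∧ j ≤ n ∧ adicCube m n k ⊆ D l j) →
          M ≤ rearr (volume.restrict (adicCube m n k)) V
                (γ (((m : ℝ) ^ n)⁻¹) * (volume (adicCube m n (fun _ : Fin d => (0 : ℤ)))).toReal)) :
    ∃ r₀' : ℝ, 0 < r₀' ∧ ∃ γ' : ℝ → ℝ,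
      (∀ r ∈ Set.Ioo (0 : ℝ) r₀', γ' r ∈ Set.Ioo (0 : ℝ) 1) ∧
      (∀ M : ℝ, ∃ᶠ r in nhdsWithin 0 (Set.Ioi 0), M ≤ γ' r / r ^ 2) ∧
      ∀ r : ℝ, 0 < r → r ≤ r₀' →
        Tendsto (fun y : EuclideanSpace ℝ (Fin d) =>
            rearr (volume.restrict (cube r y)) V (γ' r * (volume (cube r y)).toReal))
          (comap (fun y : EuclideanSpace ℝ (Fin d) => ‖y‖) atTop) atTop := by
  obtain ⟨N, hN⟩ := exists_adicScale (by exact_mod_cast hm : (1 : ℝ) < m) hθ0 hθ1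
  set H : ℝ → ℝ := fun r => ((m : ℝ) ^ (N r + 1))⁻¹
  set r₁ := min (min r₀ (1 / 2)) (1 / (θ * m ^ 2)) / 2
  have hr₁ : ∀ r ≤ r₁, (r < r₀ ∧ r < 1 / 2) ∧ r < 1 / (θ * m ^ 2) := fun r hr => by
    simpa only [lt_min_iff] using hr.trans_lt (half_lt_self (by positivity))
  have hH : ∀ r ∈ Ioc 0 r₁, θ / (2 * m) * r ≤ H r ∧ 2 * H r ≤ θ * r ∧ H r < r ∧ H r < r₀ :=
    fun r hr => by
      obtain ⟨hlow, hup, hlt⟩ := hN r ⟨hr.1, by linarith [(hr₁ r hr.2).1.2]⟩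
      exact ⟨hlow, hup, hlt, hlt.trans (hr₁ r hr.2).1.1⟩
  refine ⟨r₁, by positivity, fun r => γ (H r) * (H r / r) ^ d, fun r hr => ?_,
    frequently_le_mul_div_sq d (by positivity) (by positivity) hγmono
      (fun r hr => (hγ r hr).1.le) hγlim fun r hr => ⟨(hH r hr).1, (hH r hr).2.2.2⟩,
    fun r hr hr' => ?_⟩
  · obtain ⟨-, -, hlt, hlt₀⟩ := hH r (Ioo_subset_Ioc_self hr)
    exact mul_div_pow_mem_Ioo d (hγ _ ⟨by positivity, hlt₀⟩) (by positivity) hlt.le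
  · obtain ⟨-, hup, -, hlt₀⟩ := hH r ⟨hr, hr'⟩
    simp only [mul_div_pow_mul_volume_cube_toReal _ (by positivity : 0 ≤ H r) hr _
      (latt m (N r + 1) fun _ => 0)]
    refine tendsto_rearr_cube_of_adicCube hm hθ0 hD hVloc hr (hr₁ r hr').1.2.le (hr₁ r hr').2
      ?_ hup (hmain _ (by omega))
    rw [volume_cube_toReal (by positivity)]
    exact mul_pos (hγ _ ⟨by positivity, hlt₀⟩).1 (by positivity)

theorem stmt17 {d : ℕ} (hd : 1 ≤ d) (m : ℕ) (hm : 1 < m) (θ : ℝ)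
    (hθ0 : 0 < θ) (hθ1 : θ < 1)
    (V : EuclideanSpace ℝ (Fin d) → ℝ) (hVmeas : Measurable V) (hV0 : ∀ x, 0 ≤ V x)
    (hVloc : LocallyIntegrable V)
    (D : (Fin d → ℤ) → ℕ → Set (EuclideanSpace ℝ (Fin d)))
    (hD : ∀ l : Fin d → ℤ, IsLogDenseSystem m θ (ofInt l) (D l))
    (hne : ∀ (l : Fin d → ℤ) (n j : ℕ), 1 ≤ j → j ≤ n →
      ∃ k : Fin d → ℤ, adicCube m n k ⊆ D l j)
    (r₀ : ℝ) (hr₀ : 0 < r₀) (γ : ℝ → ℝ) (hγmono : MonotoneOn γ (Set.Ioo 0 r₀))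
    (hγ : ∀ r ∈ Set.Ioo (0 : ℝ) r₀, γ r ∈ Set.Ioo (0 : ℝ) 1)
    (hγlim : ∀ M : ℝ, ∃ᶠ r in nhdsWithin 0 (Set.Ioi 0), M ≤ γ r / r ^ 2)
    (hmain : ∀ n : ℕ, 1 ≤ n → ∀ M : ℝ,
      ∀ᶠ l in (cofinite : Filter (Fin d → ℤ)),
        ∀ k : Fin d → ℤ, (∃ j : ℕ, 1 ≤ j ∧ j ≤ n ∧ adicCube m n k ⊆ D l j) →
          M ≤ rearr (volume.restrict (adicCube m n k)) V
                (γ (((m : ℝ) ^ n)⁻¹) * (volume (adicCube m n (fun _ : Fin d => (0 : ℤ)))).toReal)) :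
    ∃ r₀' : ℝ, 0 < r₀' ∧ ∃ γ' : ℝ → ℝ,
      (∀ r ∈ Set.Ioo (0 : ℝ) r₀', γ' r ∈ Set.Ioo (0 : ℝ) 1) ∧
      (∀ M : ℝ, ∃ᶠ r in nhdsWithin 0 (Set.Ioi 0), M ≤ γ' r / r ^ 2) ∧
      ∀ r : ℝ, 0 < r → r ≤ r₀' →
        Tendsto (fun y : EuclideanSpace ℝ (Fin d) =>
            rearr (volume.restrict (cube r y)) V (γ' r * (volume (cube r y)).toReal))
          (comap (fun y : EuclideanSpace ℝ (Fin d) => ‖y‖) atTop) atTop :=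
  stmt17_general m hm θ hθ0 hθ1 V hVloc D hD r₀ hr₀ γ hγmono hγ hγlim hmain
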